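/- arXiv:1412.6925 — 2 statements merged into one kernel-verified Lean document; each statement's English description precedes it below -/
import Mathlib

section
/- Let E be a digraph on Fin N and let Ē := Relation.TransGen E be its transitive closure. Then the ℝ-submodule Submodule.span ℝ {M | ∃ i j, Ē i j ∧ M = A i j} of Matrix (Fin N) (Fin N) ℝ is closed under the commutator bracket: for all M, M' in this submodule, ⁅M, M'⁆ = M * M' - M' * M also lies in it. -/
/-- The negative of the Laplacian of the single-edge digraph `i → j`. -/
def edgeMatrix {N : ℕ} (i j : Fin N) : Matrix (Fin N) (Fin N) ℝ :=
  Matrix.single i j 1 - Matrix.single i i 1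

/-!
The span of the edge matrices of a transitive relation is even closed under matrix
multiplication:
`edgeMatrix i j * edgeMatrix k l = (δ j k - δ i k) • (edgeMatrix i l - edgeMatrix i k)`,
and when `j = k` the edge `i → l` this calls for is supplied by transitivity.
-/

open Pointwise in
theorem Submodule.mul_mem_span_of_mul_subset {R A : Type*} [CommSemiring R] [Semiring A]
    [Algebra R A] {s : Set A} (hs : s * s ⊆ span R s) {x y : A}
    (hx : x ∈ span R s) (hy : y ∈ span R s) : x * y ∈ span R s := by
  have hxy : x * y ∈ span R (s * s) := span_mul_span R s s ▸ mul_mem_mul hx hy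
  exact span_le.mpr hs hxy

section

variable {N : ℕ}

@[simp]
theorem edgeMatrix_self (i : Fin N) : edgeMatrix i i = 0 := by
  simp [edgeMatrix]

theorem edgeMatrix_mul_edgeMatrix (i j k l : Fin N) :
    edgeMatrix i j * edgeMatrix k l =
      ((if j = k then 1 else 0) - (if i = k then 1 else 0) : ℝ) •
        (edgeMatrix i l - edgeMatrix i k) := by
  by_cases hjk : j = k <;> by_cases hik : i = k <;>
    simp [edgeMatrix, sub_mul, mul_sub, hjk, hik, neg_add_eq_sub]

def edgeSpan (T : Fin N → Fin N → Prop) : Submodule ℝ (Matrix (Fin N) (Fin N) ℝ) :=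
  Submodule.span ℝ {B | ∃ i j, T i j ∧ B = edgeMatrix i j}

variable {T : Fin N → Fin N → Prop}

theorem edgeMatrix_mem_edgeSpan {i j : Fin N} (h : T i j) : edgeMatrix i j ∈ edgeSpan T :=
  Submodule.subset_span ⟨i, j, h, rfl⟩

theorem edgeMatrix_mul_edgeMatrix_mem_edgeSpan [IsTrans (Fin N) T] {i j k l : Fin N}
    (hij : T i j) (hkl : T k l) : edgeMatrix i j * edgeMatrix k l ∈ edgeSpan T := by
  rw [edgeMatrix_mul_edgeMatrix]
  by_cases hjk : j = k
  · subst hjk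
    by_cases hij' : i = j
    · simp [hij']
    · simpa [hij'] using
        sub_mem (edgeMatrix_mem_edgeSpan (_root_.trans hij hkl)) (edgeMatrix_mem_edgeSpan hij)
  · by_cases hik : i = k
    · subst hik
      simpa [hjk] using neg_mem (edgeMatrix_mem_edgeSpan hkl)
    · simp [hjk, hik]

theorem mul_mem_edgeSpan [IsTrans (Fin N) T] {M M' : Matrix (Fin N) (Fin N) ℝ}
    (hM : M ∈ edgeSpan T) (hM' : M' ∈ edgeSpan T) : M * M' ∈ edgeSpan T := by
  refine Submodule.mul_mem_span_of_mul_subset ?_ hM hM'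
  rintro _ ⟨_, ⟨i, j, hij, rfl⟩, _, ⟨k, l, hkl, rfl⟩, rfl⟩
  exact edgeMatrix_mul_edgeMatrix_mem_edgeSpan hij hkl

theorem lie_mem_edgeSpan [IsTrans (Fin N) T] {M M' : Matrix (Fin N) (Fin N) ℝ}
    (hM : M ∈ edgeSpan T) (hM' : M' ∈ edgeSpan T) : ⁅M, M'⁆ ∈ edgeSpan T := by
  rw [Ring.lie_def]
  exact sub_mem (mul_mem_edgeSpan hM hM') (mul_mem_edgeSpan hM' hM)

end

theorem span_transClosure_closed_under_bracket {N : ℕ} (E : Fin N → Fin N → Prop)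
    (M M' : Matrix (Fin N) (Fin N) ℝ)
    (hM : M ∈ Submodule.span ℝ
      {B | ∃ i j, Relation.TransGen E i j ∧ B = edgeMatrix i j})
    (hM' : M' ∈ Submodule.span ℝ
      {B | ∃ i j, Relation.TransGen E i j ∧ B = edgeMatrix i j}) :
    ⁅M, M'⁆ ∈ Submodule.span ℝ
      {B | ∃ i j, Relation.TransGen E i j ∧ B = edgeMatrix i j} :=
  lie_mem_edgeSpan hM hM'
end

section
/- Let n ≥ 1 and let x : Fin (n+1) → EuclideanSpace ℝ (Fin n) be a non-degenerate configuration, with X : Matrix (Fin (n+1)) (Fin n) ℝ the matrix with entries X i k = x i k. Then the family of matrices (A i j * X), indexed by the pairs (i, j) : Fin (n+1) × Fin (n+1) with i ≠ j, is linearly independent over ℝ; consequently, Module.finrank ℝ (Submodule.span ℝ {M | ∃ i j, i ≠ j ∧ M = A i j * X}) = n * (n + 1). -/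
/-- The matrix whose `i`-th row is the point `x i`. -/
def configMatrix {N n : ℕ} (x : Fin N → EuclideanSpace ℝ (Fin n)) :
    Matrix (Fin N) (Fin n) ℝ :=
  Matrix.of fun i k => x i k

/-!
The only nonzero row of `edgeMatrix i j * X` is row `i`, equal to the edge vector `x j - x i`.
A linear relation among these matrices therefore splits, row by row, into linear relations among
the edge vectors `x j - x i` leaving a fixed vertex `i`. Those vanish because `n + 1` points
affinely spanning `ℝⁿ` are affinely independent.
-/

theorem affineIndependent_of_affineSpan_eq_top_of_card_eq_finrank_add_one
    {k V P ι : Type*} [DivisionRing k] [AddCommGroup V] [Module k V] [AddTorsor V P]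
    [FiniteDimensional k V] [Fintype ι] {p : ι → P} (hp : affineSpan k (Set.range p) = ⊤)
    (hc : Fintype.card ι = Module.finrank k V + 1) : AffineIndependent k p := by
  rw [affineIndependent_iff_le_finrank_vectorSpan k p hc,
    AffineSubspace.vectorSpan_eq_top_of_affineSpan_eq_top k V P hp, finrank_top]

theorem edgeMatrix_mul {N : ℕ} {α : Type*} (i j : Fin N) (M : Matrix (Fin N) α ℝ) :
    edgeMatrix i j * M = Matrix.of (Pi.single i (M j - M i)) := by
  ext a b
  rcases eq_or_ne a i with rfl | hai
  · simp [edgeMatrix, Matrix.sub_mul]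
  · simp [edgeMatrix, Matrix.sub_mul, hai]

theorem linearIndependent_edgeMatrix_mul {N : ℕ} {α : Type*} {M : Matrix (Fin N) α ℝ}
    (hM : AffineIndependent ℝ M) :
    LinearIndependent ℝ
      (fun p : {p : Fin N × Fin N // p.1 ≠ p.2} => edgeMatrix p.1.1 p.1.2 * M) := by
  have hrows (a : Fin N) : LinearIndependent ℝ fun b : {b // a ≠ b} => M b - M a :=
    ((affineIndependent_iff_linearIndependent_vsub ℝ M a).1 hM).comp
      (Equiv.subtypeEquivRight fun _ => ne_comm) (Equiv.injective _)
  rw [← linearIndependent_equiv (Equiv.subtypeProdEquivSigmaSubtype fun a b : Fin N => a ≠ b).symm]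
  simp only [Function.comp_def, edgeMatrix_mul]
  exact Pi.linearIndependent_single (Ms := fun _ => α → ℝ)
    (fun a (b : {b // a ≠ b}) => M b - M a) hrows

theorem affineIndependent_configMatrix {N n : ℕ} {x : Fin N → EuclideanSpace ℝ (Fin n)}
    (hx : AffineIndependent ℝ x) : AffineIndependent ℝ (configMatrix x) :=
  hx.map' (WithLp.linearEquiv 2 ℝ (Fin n → ℝ)).toLinearMap.toAffineMap
    (WithLp.linearEquiv 2 ℝ (Fin n → ℝ)).injective

theorem card_offDiag_fin (N : ℕ) :
    Fintype.card {p : Fin N × Fin N // p.1 ≠ p.2} = N * (N - 1) := by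
  simp [Fintype.card_congr (Equiv.subtypeProdEquivSigmaSubtype fun a b : Fin N => a ≠ b)]

theorem linearIndependent_edgeMatrix_mul_config_general {n : ℕ}
    (x : Fin (n + 1) → EuclideanSpace ℝ (Fin n))
    (hx : affineSpan ℝ (Set.range x) = ⊤) :
    LinearIndependent ℝ
      (fun p : {p : Fin (n + 1) × Fin (n + 1) // p.1 ≠ p.2} =>
        edgeMatrix p.1.1 p.1.2 * configMatrix x) ∧
    Module.finrank ℝ (Submodule.span ℝ
      {M : Matrix (Fin (n + 1)) (Fin n) ℝ |
        ∃ i j, i ≠ j ∧ M = edgeMatrix i j * configMatrix x}) = n * (n + 1) := by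
  have hind := linearIndependent_edgeMatrix_mul <| affineIndependent_configMatrix <|
    affineIndependent_of_affineSpan_eq_top_of_card_eq_finrank_add_one hx (by simp)
  refine ⟨hind, ?_⟩
  have hrange : {M | ∃ i j, i ≠ j ∧ M = edgeMatrix i j * configMatrix x} =
      Set.range fun p : {p : Fin (n + 1) × Fin (n + 1) // p.1 ≠ p.2} =>
        edgeMatrix p.1.1 p.1.2 * configMatrix x :=
    Set.ext fun M => ⟨fun ⟨i, j, hij, hM⟩ => ⟨⟨(i, j), hij⟩, hM.symm⟩,
      fun ⟨p, hp⟩ => ⟨p.1.1, p.1.2, p.2, hp.symm⟩⟩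
  rw [hrange, finrank_span_eq_card hind, card_offDiag_fin, Nat.add_sub_cancel, mul_comm]

theorem linearIndependent_edgeMatrix_mul_config {n : ℕ} (hn : 1 ≤ n)
    (x : Fin (n + 1) → EuclideanSpace ℝ (Fin n))
    (hx : affineSpan ℝ (Set.range x) = ⊤) :
    LinearIndependent ℝ
      (fun p : {p : Fin (n + 1) × Fin (n + 1) // p.1 ≠ p.2} =>
        edgeMatrix p.1.1 p.1.2 * configMatrix x) ∧
    Module.finrank ℝ (Submodule.span ℝ
      {M : Matrix (Fin (n + 1)) (Fin n) ℝ |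
        ∃ i j, i ≠ j ∧ M = edgeMatrix i j * configMatrix x}) = n * (n + 1) :=
  linearIndependent_edgeMatrix_mul_config_general x hx
end
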